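/- arXiv:2002.06668 — 3 statements merged into one kernel-verified Lean document; each statement's English description precedes it below -/
import Mathlib

section
/- Suppose a polynomial q : R → R satisfies |q(z) − 1| ≤ ε₁ for all z ∈ [1−ρ²/2, 1] and |q(z)| ≤ ε₁ for all z ∈ [−1, 1−(δ−ρ)²/2), where ε₁ = ε/(3n). Let x₁,…,xₙ be unit vectors in R^d with pairwise distances ‖x_i − x_j‖₂ ≥ δ for i ≠ j, let y₁,…,yₙ ∈ [−1,1], and define f*(x) = Σ_{i=1}^n y_i · q(⟨x_i, x⟩). Then for every i ∈ [n] and every unit vector x̃ with ‖x̃ − x_i‖₂ ≤ ρ, |f*(x̃) − y_i| ≤ ε/3. -/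
open scoped RealInnerProductSpace

/-- if `q` approximates the step function (within `ε/(3n)`) on
`[1-ρ²/2, 1]` and `[-1, 1-(δ-ρ)²/2)`, the unit vectors `x_i` are `δ`-separated
and `|y_i| ≤ 1`, then `f*(x) = ∑ y_i q(⟨x_i, x⟩)` robustly fits:
for every `i` and unit `xt` with `‖xt - x_i‖ ≤ ρ`, `|f*(xt) - y_i| ≤ ε/3`. -/
theorem robust_fitting (d n : ℕ) (hn : 1 ≤ n) (ε ρ δ : ℝ)
    (hε : ε ∈ Set.Ioo (0 : ℝ) 1) (hρ : 0 < ρ) (hδ : 0 < δ) (hρδ : 2 * ρ < δ)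
    (x : Fin n → EuclideanSpace ℝ (Fin d)) (hx : ∀ i, ‖x i‖ = 1)
    (hsep : ∀ i j, i ≠ j → δ ≤ ‖x i - x j‖)
    (y : Fin n → ℝ) (hy : ∀ i, |y i| ≤ 1)
    (q : ℝ → ℝ)
    (hq1 : ∀ z ∈ Set.Icc (1 - ρ ^ 2 / 2) 1, |q z - 1| ≤ ε / (3 * n))
    (hq0 : ∀ z ∈ Set.Ico (-1 : ℝ) (1 - (δ - ρ) ^ 2 / 2), |q z| ≤ ε / (3 * n)) :
    ∀ i : Fin n, ∀ xt : EuclideanSpace ℝ (Fin d), ‖xt‖ = 1 → ‖xt - x i‖ ≤ ρ →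
      |(∑ j, y j * q ⟪x j, xt⟫) - y i| ≤ ε / 3 := by
  intro i xt hxt hclose
  have hn0 : (0:ℝ) < n := by exact_mod_cast hn
  have hε1 : (0:ℝ) ≤ ε / (3 * n) := div_nonneg hε.1.le (by positivity)
  have hδρ : 0 < δ - ρ := by linarith
  have hnorm : ∀ a b : EuclideanSpace ℝ (Fin d), ‖a‖ = 1 → ‖b‖ = 1 →
      ‖a - b‖ ^ 2 = 2 - 2 * ⟪a, b⟫ := by
    intro a b ha hb
    rw [norm_sub_sq_real, ha, hb]; ring
  -- inner product of x i with xt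
  have hii : |q ⟪x i, xt⟫ - 1| ≤ ε / (3 * n) := by
    apply hq1
    constructor
    · have h2 := hnorm xt (x i) hxt (hx i)
      have hsq : ‖xt - x i‖ ^ 2 ≤ ρ ^ 2 :=
        pow_le_pow_left₀ (norm_nonneg _) hclose 2
      rw [real_inner_comm (x i) xt] at h2
      linarith
    · calc ⟪x i, xt⟫ ≤ ‖x i‖ * ‖xt‖ := real_inner_le_norm _ _
        _ = 1 := by rw [hxt, hx i]; ring
  -- for j ≠ i
  have hjj : ∀ j, j ≠ i → |q ⟪x j, xt⟫| ≤ ε / (3 * n) := by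
    intro j hji
    apply hq0
    constructor
    · have := abs_real_inner_le_norm (x j) xt
      rw [hxt, hx j, one_mul] at this
      linarith [neg_abs_le ⟪x j, xt⟫]
    · -- need strict: ‖xt - x j‖ > δ - ρ
      have hstrict : δ - ρ < ‖xt - x j‖ := by
        by_contra hle
        push_neg at hle
        have htri : ‖x i - x j‖ ≤ ‖x i - xt‖ + ‖xt - x j‖ :=
          norm_sub_le_norm_sub_add_norm_sub _ _ _
        have hixt : ‖x i - xt‖ ≤ ρ := by rw [norm_sub_rev]; exact hclose
        have hij : δ ≤ ‖x i - x j‖ := hsep i j (Ne.symm hji)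
        have h1 : ‖x i - xt‖ = ρ := by linarith
        have h2 : ‖xt - x j‖ = δ - ρ := by linarith
        have heq : ‖(x i - xt) + (xt - x j)‖ = ‖x i - xt‖ + ‖xt - x j‖ := by
          have hadd : (x i - xt) + (xt - x j) = x i - x j := by abel
          rw [hadd, h1, h2]; linarith
        have hsr : SameRay ℝ (x i - xt) (xt - x j) := by
          rw [sameRay_iff_norm_add]; exact heq
        have hu : x i - xt ≠ 0 := by
          intro h; rw [h] at h1; simp at h1; linarith
        have hv : xt - x j ≠ 0 := by
          intro h; rw [h] at h2; simp at h2; linarith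
        obtain ⟨r, s, hr, hs, hrs⟩ := hsr.exists_pos hu hv
        have hiu : ⟪xt, x i - xt⟫ = -(ρ ^ 2) / 2 := by
          have e1 : ⟪xt, x i - xt⟫ = ⟪xt, x i⟫ - 1 := by
            rw [inner_sub_right, real_inner_self_eq_norm_sq, hxt]; ring
          have e2 := hnorm xt (x i) hxt (hx i)
          rw [norm_sub_rev, h1] at e2
          rw [e1]; nlinarith
        have hiv : ⟪xt, xt - x j⟫ = (δ - ρ) ^ 2 / 2 := by
          have e1 : ⟪xt, xt - x j⟫ = 1 - ⟪xt, x j⟫ := by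
            rw [inner_sub_right, real_inner_self_eq_norm_sq, hxt]; ring
          have e2 := hnorm xt (x j) hxt (hx j)
          rw [h2] at e2
          rw [e1]; nlinarith
        have hfin := congrArg (fun v => ⟪xt, v⟫) hrs
        simp only [real_inner_smul_right] at hfin
        rw [hiu, hiv] at hfin
        nlinarith [mul_pos hr (pow_pos hρ 2), mul_pos hs (pow_pos hδρ 2)]
      have hsq : (δ - ρ) ^ 2 < ‖xt - x j‖ ^ 2 := by
        apply pow_lt_pow_left₀ hstrict (le_of_lt hδρ)
        norm_num
      have h2 := hnorm xt (x j) hxt (hx j)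
      rw [real_inner_comm (x j) xt] at h2
      linarith
  -- sum
  have hsplit : (∑ j, y j * q ⟪x j, xt⟫)
      = y i * q ⟪x i, xt⟫ + ∑ j ∈ Finset.univ.erase i, y j * q ⟪x j, xt⟫ :=
    (Finset.add_sum_erase _ _ (Finset.mem_univ i)).symm
  have hrest : |∑ j ∈ Finset.univ.erase i, y j * q ⟪x j, xt⟫|
      ≤ ((n : ℝ) - 1) * (ε / (3 * n)) := by
    calc |∑ j ∈ Finset.univ.erase i, y j * q ⟪x j, xt⟫|
        ≤ ∑ j ∈ Finset.univ.erase i, |y j * q ⟪x j, xt⟫| :=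
          Finset.abs_sum_le_sum_abs _ _
      _ ≤ ∑ _j ∈ Finset.univ.erase i, (ε / (3 * n)) := by
          apply Finset.sum_le_sum
          intro j hj
          have hji : j ≠ i := Finset.ne_of_mem_erase hj
          rw [abs_mul]
          calc |y j| * |q ⟪x j, xt⟫| ≤ 1 * (ε / (3 * n)) :=
              mul_le_mul (hy j) (hjj j hji) (abs_nonneg _) zero_le_one
            _ = ε / (3 * n) := one_mul _
      _ = ((n : ℝ) - 1) * (ε / (3 * n)) := by
          rw [Finset.sum_const, Finset.card_erase_of_mem (Finset.mem_univ i),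
            nsmul_eq_mul, Finset.card_univ, Fintype.card_fin, Nat.cast_sub hn,
            Nat.cast_one]
  have hfirst : |y i * q ⟪x i, xt⟫ - y i| ≤ ε / (3 * n) := by
    have he : y i * q ⟪x i, xt⟫ - y i = y i * (q ⟪x i, xt⟫ - 1) := by ring
    rw [he, abs_mul]
    calc |y i| * |q ⟪x i, xt⟫ - 1| ≤ 1 * (ε / (3 * n)) :=
        mul_le_mul (hy i) hii (abs_nonneg _) zero_le_one
      _ = ε / (3 * n) := one_mul _
  have hfinal : ε / (3 * n) + ((n : ℝ) - 1) * (ε / (3 * n)) = ε / 3 := by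
    have hne : (n : ℝ) ≠ 0 := ne_of_gt hn0
    have h1 : ε / (3 * n) + ((n : ℝ) - 1) * (ε / (3 * n)) = (n : ℝ) * (ε / (3 * n)) := by
      ring
    rw [h1, mul_comm 3 ((n : ℝ)), ← mul_div_assoc]
    exact mul_div_mul_left ε 3 hne
  calc |(∑ j, y j * q ⟪x j, xt⟫) - y i|
      = |(y i * q ⟪x i, xt⟫ - y i) + ∑ j ∈ Finset.univ.erase i, y j * q ⟪x j, xt⟫| := by
        rw [hsplit]; congr 1; ring
    _ ≤ |y i * q ⟪x i, xt⟫ - y i| + |∑ j ∈ Finset.univ.erase i, y j * q ⟪x j, xt⟫| :=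
        abs_add_le _ _
    _ ≤ ε / (3 * n) + ((n : ℝ) - 1) * (ε / (3 * n)) := add_le_add hfirst hrest
    _ = ε / 3 := hfinal
end

section
/- Let p_k(z) = z · Σ_{i=0}^k (1−z²)^i · Π_{j=1}^i (2j−1)/(2j). If z ∈ [−1,1] with |z| ≥ η > 0 and k ≥ (1/η²)·ln(2/ε₁), then |sgn(z) − p_k(z)| ≤ ε₁/2. -/
/-!
For `t > 0` the polynomial `p_k(t) = t ∑_{i ≤ k} c_i (1 - t²)^i` truncates the series
`t (1 - (1 - t²))^{-1/2} = 1`, where `c_i = ∏_{j ≤ i} (2j - 1)/(2j)`. Its derivative telescopes to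
`(2k+1) c_k (1 - t²)^k ≥ 0`, so `p_k` increases to `p_k(1) = 1` on `[0, 1]`. Comparing this
derivative with that of `(1 - t²)^{k+1} / (2(k+1)t)` gives
`0 ≤ 1 - p_k(t) ≤ (2k+1) c_k (1 - t²)^{k+1} / (2(k+1)t)`, and `(2k+1) c_k² ≤ 1` together with
`(1 - t²)^k ≤ exp(-kη²) ≤ ε₁/2` bounds this by `ε₁/2`. Oddness of `p_k` handles `z < 0`.
-/

open Finset Real

/-- The coefficient of `x^i` in `(1 - x)^{-1/2}`, i.e. `(2i choose i) / 4^i`. -/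
noncomputable def invSqrtCoeff (i : ℕ) : ℝ := ∏ j ∈ Icc 1 i, ((2 * (j : ℝ) - 1) / (2 * j))

noncomputable def signPoly (k : ℕ) (z : ℝ) : ℝ :=
  z * ∑ i ∈ range (k + 1), (1 - z ^ 2) ^ i * invSqrtCoeff i

lemma invSqrtCoeff_zero : invSqrtCoeff 0 = 1 := by simp [invSqrtCoeff]

lemma invSqrtCoeff_succ (i : ℕ) :
    invSqrtCoeff (i + 1) = invSqrtCoeff i * ((2 * i + 1) / (2 * i + 2)) := by
  rw [invSqrtCoeff, invSqrtCoeff, prod_Icc_succ_top (by omega)]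
  push_cast
  ring_nf

lemma invSqrtCoeff_pos (i : ℕ) : 0 < invSqrtCoeff i := by
  induction i with
  | zero => simp [invSqrtCoeff_zero]
  | succ i ih => rw [invSqrtCoeff_succ]; positivity

lemma two_mul_add_one_mul_invSqrtCoeff_sq_le_one (i : ℕ) :
    (2 * i + 1) * invSqrtCoeff i ^ 2 ≤ 1 := by
  induction i with
  | zero => simp [invSqrtCoeff_zero]
  | succ i ih =>
    have hratio : (2 * i + 3) * (2 * i + 1) / (2 * i + 2) ^ 2 ≤ (1 : ℝ) :=
      div_le_one_of_le₀ (by nlinarith) (by positivity)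
    calc (2 * ((i + 1 : ℕ) : ℝ) + 1) * invSqrtCoeff (i + 1) ^ 2
        = (2 * i + 1) * invSqrtCoeff i ^ 2 * ((2 * i + 3) * (2 * i + 1) / (2 * i + 2) ^ 2) := by
          rw [invSqrtCoeff_succ]; push_cast; field_simp; ring
      _ ≤ 1 * 1 := by gcongr
      _ = 1 := one_mul 1

lemma sum_invSqrtCoeff_mul_telescope (k : ℕ) (x : ℝ) :
    ∑ i ∈ range (k + 1), invSqrtCoeff i * (x ^ i - 2 * (1 - x) * i * x ^ (i - 1)) =
      (2 * k + 1) * invSqrtCoeff k * x ^ k := by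
  induction k with
  | zero => simp [invSqrtCoeff_zero]
  | succ k ih =>
    rw [sum_range_succ, ih, invSqrtCoeff_succ, Nat.add_sub_cancel, pow_succ]
    push_cast
    field_simp
    ring

lemma hasDerivAt_signPoly (k : ℕ) (t : ℝ) :
    HasDerivAt (signPoly k) ((2 * k + 1) * invSqrtCoeff k * (1 - t ^ 2) ^ k) t := by
  have hx : HasDerivAt (fun v : ℝ => 1 - v ^ 2) (-(2 * t)) t := by
    simpa using (hasDerivAt_pow 2 t).const_sub 1
  have hsum := HasDerivAt.fun_sum fun i (_ : i ∈ range (k + 1)) =>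
    (hx.fun_pow i).mul_const (invSqrtCoeff i)
  refine ((hasDerivAt_id t).fun_mul hsum).congr_deriv ?_
  rw [← sum_invSqrtCoeff_mul_telescope, id, one_mul, mul_sum, ← sum_add_distrib]
  exact sum_congr rfl fun i _ => by ring

lemma signPoly_one (k : ℕ) : signPoly k 1 = 1 := by
  simp [signPoly, sum_range_succ', invSqrtCoeff_zero]

lemma signPoly_neg (k : ℕ) (z : ℝ) : signPoly k (-z) = -signPoly k z := by
  simp [signPoly]

lemma monotoneOn_signPoly (k : ℕ) : MonotoneOn (signPoly k) (Set.Icc (-1) 1) := by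
  refine monotoneOn_of_hasDerivWithinAt_nonneg (convex_Icc _ _)
    (fun t _ => (hasDerivAt_signPoly k t).continuousAt.continuousWithinAt)
    (fun t _ => (hasDerivAt_signPoly k t).hasDerivWithinAt) fun t ht => ?_
  rw [interior_Icc] at ht
  have : 0 ≤ 1 - t ^ 2 := by nlinarith [ht.1, ht.2]
  have := invSqrtCoeff_pos k
  positivity

lemma signPoly_le_one (k : ℕ) {t : ℝ} (ht : t ∈ Set.Icc (-1) 1) : signPoly k t ≤ 1 :=
  signPoly_one k ▸ monotoneOn_signPoly k ht ⟨by norm_num, le_rfl⟩ ht.2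

lemma hasDerivAt_one_sub_sq_pow_div (k : ℕ) {w : ℝ} (hw : w ≠ 0) :
    HasDerivAt (fun v : ℝ => (1 - v ^ 2) ^ (k + 1) / (2 * (k + 1) * v))
      (-(1 - w ^ 2) ^ k - (1 - w ^ 2) ^ (k + 1) / (2 * (k + 1) * w ^ 2)) w := by
  have hx : HasDerivAt (fun v : ℝ => 1 - v ^ 2) (-(2 * w)) w := by
    simpa using (hasDerivAt_pow 2 w).const_sub 1
  have hden : HasDerivAt (fun v : ℝ => 2 * ((k : ℝ) + 1) * v) (2 * (k + 1)) w := by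
    simpa using (hasDerivAt_id w).const_mul (2 * ((k : ℝ) + 1))
  refine ((hx.fun_pow (k + 1)).fun_div hden (by positivity)).congr_deriv ?_
  rw [Nat.add_sub_cancel]
  push_cast
  field_simp

lemma one_sub_signPoly_le (k : ℕ) {t : ℝ} (ht0 : 0 < t) (ht1 : t ≤ 1) :
    1 - signPoly k t ≤
      (2 * k + 1) * invSqrtCoeff k * (1 - t ^ 2) ^ (k + 1) / (2 * (k + 1) * t) := by
  set C : ℝ := (2 * k + 1) * invSqrtCoeff k
  set H : ℝ → ℝ := fun v => signPoly k v + C * ((1 - v ^ 2) ^ (k + 1) / (2 * (k + 1) * v))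
  have hH : ∀ v ≠ 0,
      HasDerivAt H (-(C * ((1 - v ^ 2) ^ (k + 1) / (2 * (k + 1) * v ^ 2)))) v := fun v hv => by
    refine ((hasDerivAt_signPoly k v).fun_add
      ((hasDerivAt_one_sub_sq_pow_div k hv).const_mul C)).congr_deriv ?_
    ring
  have hanti : AntitoneOn H (Set.Icc t 1) := by
    refine antitoneOn_of_hasDerivWithinAt_nonpos (f' := fun v =>
        -(C * ((1 - v ^ 2) ^ (k + 1) / (2 * (k + 1) * v ^ 2)))) (convex_Icc _ _)
      (fun v hv => (hH v (ht0.trans_le hv.1).ne').continuousAt.continuousWithinAt)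
      (fun v hv => ?_) fun v hv => ?_ <;> rw [interior_Icc] at hv
    · exact (hH v (ht0.trans hv.1).ne').hasDerivWithinAt
    · have : 0 ≤ 1 - v ^ 2 := by nlinarith [ht0.trans hv.1, hv.2]
      have := invSqrtCoeff_pos k
      simp only [neg_nonpos, C]
      positivity
  have hH1 : H 1 = 1 := by simp [H, signPoly_one]
  have := hanti ⟨le_rfl, ht1⟩ ⟨ht1, le_rfl⟩ ht1
  simp only [hH1, H] at this
  rw [mul_div_assoc]
  linarith

lemma one_sub_sq_pow_le_exp {η t : ℝ} (hη : 0 ≤ η) (hηt : η ≤ t) (ht : t ≤ 1) (n : ℕ) :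
    (1 - t ^ 2) ^ n ≤ exp (-(n * η ^ 2)) :=
  calc (1 - t ^ 2) ^ n ≤ (1 - η ^ 2) ^ n := pow_le_pow_left₀ (by nlinarith) (by nlinarith) n
    _ ≤ exp (-η ^ 2) ^ n := pow_le_pow_left₀ (by nlinarith) (one_sub_le_exp_neg _) n
    _ = exp (-(n * η ^ 2)) := by rw [← exp_nat_mul]; ring_nf

lemma signPoly_error_bound_le {η ε t : ℝ} {k : ℕ} (hη : 0 < η) (hε : 0 < ε) (hε1 : ε ≤ 1)
    (hk : 1 / η ^ 2 * log (2 / ε) ≤ k) (hηt : η ≤ t) (ht : t ≤ 1) :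
    (2 * k + 1) * invSqrtCoeff k * (1 - t ^ 2) ^ (k + 1) / (2 * (k + 1) * t) ≤ ε / 2 := by
  have hkη : log (2 / ε) ≤ k * η ^ 2 := by
    rwa [one_div_mul_eq_div, div_le_iff₀ (by positivity)] at hk
  have hpow : (1 - t ^ 2) ^ (k + 1) ≤ ε / 2 :=
    calc (1 - t ^ 2) ^ (k + 1) ≤ (1 - t ^ 2) ^ k :=
          pow_le_pow_of_le_one (by nlinarith) (by nlinarith) k.le_succ
      _ ≤ exp (-(k * η ^ 2)) := one_sub_sq_pow_le_exp hη.le hηt ht k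
      _ ≤ exp (-log (2 / ε)) := exp_le_exp.2 (neg_le_neg hkη)
      _ = ε / 2 := by rw [exp_neg, exp_log (by positivity), inv_div]
  have hlog2 : log 2 ≤ log (2 / ε) :=
    log_le_log two_pos ((le_div_iff₀ hε).2 (by linarith))
  have h2kη : 1 ≤ 2 * k * η ^ 2 := by linarith [log_two_gt_d9]
  have hCsq : ((2 * k + 1) * invSqrtCoeff k) ^ 2 ≤ (2 * (k + 1) * t) ^ 2 := by
    have := two_mul_add_one_mul_invSqrtCoeff_sq_le_one k
    have : η ^ 2 ≤ t ^ 2 := by nlinarith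
    nlinarith [sq_nonneg ((k : ℝ) + 1)]
  have hC : (2 * k + 1) * invSqrtCoeff k ≤ 2 * (k + 1) * t :=
    (pow_le_pow_iff_left₀ (mul_pos (by positivity) (invSqrtCoeff_pos k)).le (by nlinarith)
      two_ne_zero).1 hCsq
  rw [div_le_iff₀ (by nlinarith)]
  calc (2 * k + 1) * invSqrtCoeff k * (1 - t ^ 2) ^ (k + 1) ≤ 2 * (k + 1) * t * (ε / 2) :=
        mul_le_mul hC hpow (pow_nonneg (by nlinarith) _) (by nlinarith)
    _ = ε / 2 * (2 * (k + 1) * t) := mul_comm _ _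

lemma abs_sign_sub_signPoly (k : ℕ) {z : ℝ} (hz : z ≠ 0) :
    |Real.sign z - signPoly k z| = |1 - signPoly k (|z|)| := by
  rcases hz.lt_or_gt with h | h
  · rw [Real.sign_of_neg h, abs_of_neg h, signPoly_neg,
      show -1 - signPoly k z = -(1 - -signPoly k z) by ring, abs_neg]
  · rw [Real.sign_of_pos h, abs_of_pos h]

theorem sign_poly_approx_general (η ε₁ : ℝ) (hη : η ∈ Set.Ioo (0 : ℝ) 1)
    (hε₁ : ε₁ ∈ Set.Ioo (0 : ℝ) 1) (k : ℕ)
    (hkbig : (1 / η ^ 2) * Real.log (2 / ε₁) ≤ (k : ℝ))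
    (z : ℝ) (hz : z ∈ Set.Icc (-1 : ℝ) 1) (hzη : η ≤ |z|) :
    |Real.sign z -
        z * ∑ i ∈ Finset.range (k + 1),
          (1 - z ^ 2) ^ i * ∏ j ∈ Finset.Icc 1 i, ((2 * (j : ℝ) - 1) / (2 * j))|
      ≤ ε₁ / 2 := by
  change |Real.sign z - signPoly k z| ≤ ε₁ / 2
  have hz0 : 0 < |z| := hη.1.trans_le hzη
  have hz1 : |z| ≤ 1 := abs_le.2 hz
  rw [abs_sign_sub_signPoly k (abs_pos.1 hz0),
    abs_of_nonneg (sub_nonneg.2 (signPoly_le_one k ⟨by linarith, hz1⟩))]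
  exact (one_sub_signPoly_le k hz0 hz1).trans
    (signPoly_error_bound_le hη.1 hε₁.1 hε₁.2.le hkbig hzη hz1)

/-- for `p_k(z) = z ∑_{i=0}^k (1-z²)^i ∏_{j=1}^i (2j-1)/(2j)`,
if `z ∈ [-1,1]`, `|z| ≥ η > 0` and `k ≥ (1/η²) ln(2/ε₁)`, then
`|sgn(z) - p_k(z)| ≤ ε₁/2`. -/
theorem sign_poly_approx (η ε₁ : ℝ) (hη : η ∈ Set.Ioo (0 : ℝ) 1)
    (hε₁ : ε₁ ∈ Set.Ioo (0 : ℝ) 1) (k : ℕ) (hk : 1 ≤ k)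
    (hkbig : (1 / η ^ 2) * Real.log (2 / ε₁) ≤ (k : ℝ))
    (z : ℝ) (hz : z ∈ Set.Icc (-1 : ℝ) 1) (hzη : η ≤ |z|) :
    |Real.sign z -
        z * ∑ i ∈ Finset.range (k + 1),
          (1 - z ^ 2) ^ i * ∏ j ∈ Finset.Icc 1 i, ((2 * (j : ℝ) - 1) / (2 * j))|
      ≤ ε₁ / 2 :=
  sign_poly_approx_general η ε₁ hη hε₁ k hkbig z hz hzη
end

section
/- Let k, D be positive integers with D ≥ sqrt(2k·ln(4k/ε₁)) for ε₁ ∈ (0,1). Define p_k(z) = z·Σ_{i=0}^k (1−z²)^i Π_{j=1}^i (2j−1)/(2j), and p̃_k(z) = Σ_{i=0}^k z·(Π_{j=1}^i (2j−1)/(2j))·p_{i,D}(1−z²), where p_{i,D} satisfies |p_{i,D}(w) − w^i| ≤ 2exp(−D²/(2i)) for all w ∈ [−1,1] (and p_{0,D}(w) = 1). Then for all z ∈ [−1,1], |p̃_k(z) − p_k(z)| ≤ ε₁/2. -/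
open Finset Real

/-- compressing `p_k(z) = z ∑_{i=0}^k (1-z²)^i ∏_{j≤i}(2j-1)/(2j)`
term by term with polynomials `p_{i,D}` satisfying
`|p_{i,D}(w) - w^i| ≤ 2exp(-D²/(2i))` on `[-1,1]` (and `p_{0,D} = 1`) yields,
for `D ≥ sqrt(2k ln(4k/ε₁))`, a uniform error of at most `ε₁/2` on `[-1,1]`. -/
theorem compressed_sign_poly_close (k D : ℕ) (hk : 1 ≤ k) (hD : 1 ≤ D)
    (ε₁ : ℝ) (hε₁ : ε₁ ∈ Set.Ioo (0 : ℝ) 1)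
    (hDbig : Real.sqrt (2 * k * Real.log (4 * k / ε₁)) ≤ (D : ℝ))
    (p : ℕ → ℝ → ℝ)
    (hp0 : ∀ w : ℝ, p 0 w = 1)
    (hp : ∀ i : ℕ, 1 ≤ i → i ≤ k → ∀ w ∈ Set.Icc (-1 : ℝ) 1,
      |p i w - w ^ i| ≤ 2 * Real.exp (-(D : ℝ) ^ 2 / (2 * i)))
    (z : ℝ) (hz : z ∈ Set.Icc (-1 : ℝ) 1) :
    |(∑ i ∈ Finset.range (k + 1),
          z * (∏ j ∈ Finset.Icc 1 i, ((2 * (j : ℝ) - 1) / (2 * j))) * p i (1 - z ^ 2)) -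
        z * ∑ i ∈ Finset.range (k + 1),
          (1 - z ^ 2) ^ i * ∏ j ∈ Finset.Icc 1 i, ((2 * (j : ℝ) - 1) / (2 * j))|
      ≤ ε₁ / 2 := by
  obtain ⟨hε0, hε1⟩ := hε₁
  have hkpos : (0 : ℝ) < k := by exact_mod_cast hk
  have hk1 : (1 : ℝ) ≤ k := by exact_mod_cast hk
  set w : ℝ := 1 - z ^ 2 with hwdef
  have habsz : |z| ≤ 1 := abs_le.mpr ⟨hz.1, hz.2⟩
  have hz2 : z ^ 2 ≤ 1 := by
    have := sq_abs z
    nlinarith [sq_nonneg z, habsz, abs_nonneg z]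
  have hw : w ∈ Set.Icc (-1 : ℝ) 1 := by
    constructor <;> simp only [hwdef] <;> nlinarith [sq_nonneg z]
  -- product bounds
  have hprod0 : ∀ i : ℕ, (0:ℝ) ≤ ∏ j ∈ Finset.Icc 1 i, ((2 * (j : ℝ) - 1) / (2 * j)) := by
    intro i
    apply Finset.prod_nonneg
    intro j hj
    have hj1 : 1 ≤ j := (Finset.mem_Icc.mp hj).1
    have : (1:ℝ) ≤ j := by exact_mod_cast hj1
    apply div_nonneg <;> linarith
  have hprod1 : ∀ i : ℕ, (∏ j ∈ Finset.Icc 1 i, ((2 * (j : ℝ) - 1) / (2 * j))) ≤ 1 := by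
    intro i
    apply Finset.prod_le_one
    · intro j hj
      have hj1 : (1:ℝ) ≤ j := by exact_mod_cast (Finset.mem_Icc.mp hj).1
      apply div_nonneg <;> linarith
    · intro j hj
      have hj1 : (1:ℝ) ≤ j := by exact_mod_cast (Finset.mem_Icc.mp hj).1
      rw [div_le_one (by positivity)]
      linarith
  -- the key constant
  have hC : (k : ℝ) * (2 * Real.exp (-(D : ℝ) ^ 2 / (2 * k))) ≤ ε₁ / 2 := by
    have hlog : 0 ≤ Real.log (4 * k / ε₁) := by
      apply Real.log_nonneg
      rw [le_div_iff₀ hε0]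
      nlinarith
    have hx : 2 * (k:ℝ) * Real.log (4 * k / ε₁) ≤ (D:ℝ)^2 := by
      have hx0 : 0 ≤ 2 * (k:ℝ) * Real.log (4 * k / ε₁) := by positivity
      nlinarith [Real.sq_sqrt hx0, Real.sqrt_nonneg (2 * (k:ℝ) * Real.log (4 * k / ε₁)),
        hDbig]
    have hexp : Real.exp (-(D : ℝ) ^ 2 / (2 * k)) ≤ ε₁ / (4 * k) := by
      have h1 : -(D : ℝ) ^ 2 / (2 * k) ≤ -Real.log (4 * k / ε₁) := by
        rw [div_le_iff₀ (by positivity)]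
        nlinarith
      calc Real.exp (-(D : ℝ) ^ 2 / (2 * k)) ≤ Real.exp (-Real.log (4 * k / ε₁)) :=
            Real.exp_le_exp.mpr h1
        _ = (4 * k / ε₁)⁻¹ := by
            rw [Real.exp_neg, Real.exp_log (by positivity)]
        _ = ε₁ / (4 * k) := by field_simp
    have : (k : ℝ) * (2 * (ε₁ / (4 * k))) = ε₁ / 2 := by field_simp; ring
    nlinarith
  -- rewrite difference as a single sum
  have hrw : (∑ i ∈ Finset.range (k + 1),
          z * (∏ j ∈ Finset.Icc 1 i, ((2 * (j : ℝ) - 1) / (2 * j))) * p i w) -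
        z * ∑ i ∈ Finset.range (k + 1),
          w ^ i * ∏ j ∈ Finset.Icc 1 i, ((2 * (j : ℝ) - 1) / (2 * j))
      = ∑ i ∈ Finset.range (k + 1),
          z * (∏ j ∈ Finset.Icc 1 i, ((2 * (j : ℝ) - 1) / (2 * j))) * (p i w - w ^ i) := by
    rw [Finset.mul_sum, ← Finset.sum_sub_distrib]
    apply Finset.sum_congr rfl
    intro i _
    ring
  rw [hrw]
  -- bound the sum
  set g : ℕ → ℝ := fun i => if i = 0 then 0 else 2 * Real.exp (-(D : ℝ) ^ 2 / (2 * k))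
    with hg
  calc |∑ i ∈ Finset.range (k + 1),
          z * (∏ j ∈ Finset.Icc 1 i, ((2 * (j : ℝ) - 1) / (2 * j))) * (p i w - w ^ i)|
      ≤ ∑ i ∈ Finset.range (k + 1),
          |z * (∏ j ∈ Finset.Icc 1 i, ((2 * (j : ℝ) - 1) / (2 * j))) * (p i w - w ^ i)| :=
        Finset.abs_sum_le_sum_abs _ _
    _ ≤ ∑ i ∈ Finset.range (k + 1), g i := by
        apply Finset.sum_le_sum
        intro i hi
        rcases Nat.eq_zero_or_pos i with h0 | h1
        · subst h0
          simp [hp0, hg]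
        · have hik : i ≤ k := Nat.lt_succ_iff.mp (Finset.mem_range.mp hi)
          have hpi := hp i h1 hik w hw
          have hgi : g i = 2 * Real.exp (-(D : ℝ) ^ 2 / (2 * k)) := by
            simp [hg, Nat.pos_iff_ne_zero.mp h1]
          rw [hgi, abs_mul, abs_mul]
          have habsprod : |∏ j ∈ Finset.Icc 1 i, ((2 * (j : ℝ) - 1) / (2 * j))| ≤ 1 := by
            rw [abs_of_nonneg (hprod0 i)]; exact hprod1 i
          have hstep : 2 * Real.exp (-(D : ℝ) ^ 2 / (2 * i)) ≤
              2 * Real.exp (-(D : ℝ) ^ 2 / (2 * k)) := by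
            have hipos : (0:ℝ) < i := by exact_mod_cast h1
            have hik' : (i:ℝ) ≤ k := by exact_mod_cast hik
            have : -(D : ℝ) ^ 2 / (2 * i) ≤ -(D : ℝ) ^ 2 / (2 * k) := by
              rw [div_le_div_iff₀ (by positivity) (by positivity)]
              nlinarith [sq_nonneg (D:ℝ)]
            gcongr
          have h1' : |z| * |∏ j ∈ Finset.Icc 1 i, ((2 * (j : ℝ) - 1) / (2 * j))| ≤ 1 := by
            calc |z| * |∏ j ∈ Finset.Icc 1 i, ((2 * (j : ℝ) - 1) / (2 * j))| ≤ 1 * 1 := by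
                  apply mul_le_mul habsz habsprod (abs_nonneg _) zero_le_one
              _ = 1 := mul_one 1
          calc |z| * |∏ j ∈ Finset.Icc 1 i, ((2 * (j : ℝ) - 1) / (2 * j))| * |p i w - w ^ i|
              ≤ 1 * |p i w - w ^ i| := by
                apply mul_le_mul_of_nonneg_right h1' (abs_nonneg _)
            _ = |p i w - w ^ i| := one_mul _
            _ ≤ 2 * Real.exp (-(D : ℝ) ^ 2 / (2 * i)) := hpi
            _ ≤ 2 * Real.exp (-(D : ℝ) ^ 2 / (2 * k)) := hstep
    _ = (k : ℝ) * (2 * Real.exp (-(D : ℝ) ^ 2 / (2 * k))) := by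
        rw [Finset.sum_range_succ']
        simp [hg]
    _ ≤ ε₁ / 2 := hC
end
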